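/- arXiv:2605.29650 — 2 statements merged into one kernel-verified Lean document; each statement's English description precedes it below -/
import Mathlib

section
/- Let (E,e,T) be a T-universally complete conditional Riesz triple and μ ∈ ba(C_e,R(T)). Then |μ|(e) = sup{ Σ_{p ∈ Z} |μ(p)| : Z ⊆ C_e is a finite partition of e }, where the supremum is taken in R(T); i.e., the R(T)-valued norm ‖μ‖_{ba(C_e,R(T))} = |μ|(e) equals the total variation of μ. -/
open scoped Classical

noncomputable section

namespace RieszPaper

universe u v w

/-! ### Basic Riesz space notions -/

section BasicDefs

variable {E : Type u} [Lattice E] [AddCommGroup E]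

/-- The positive part `x ⊔ 0`. -/
def rpos (x : E) : E := x ⊔ 0

/-- The set of components of `e`, i.e. elements `p` with `p ⊓ (e - p) = 0`. -/
def Comp (e : E) : Set E := {p | p ⊓ (e - p) = 0}

/-- Disjoint complement of a set. -/
def disjC (S : Set E) : Set E := {x | ∀ y ∈ S, |x| ⊓ |y| = 0}

/-- The principal band generated by `f` (as double disjoint complement). -/
def pBand (f : E) : Set E := disjC (disjC {f})

/-- `e` is a weak order unit: `e > 0` and the band generated by `e` is all of `E`. -/
def IsWeakUnit (e : E) : Prop := 0 < e ∧ ∀ x : E, 0 ≤ x → x ⊓ e = 0 → x = 0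

/-- The chain `x ⊓ n•|f|`, whose supremum is the band projection of `x ≥ 0`
onto the band generated by `f`. -/
def projChain (f x : E) : Set E := {y | ∃ n : ℕ, y = x ⊓ n • |f|}

/-- Band projection of a positive element onto the band generated by `f`. -/
def projP (f x : E) : E := if h : ∃ s, IsLUB (projChain f x) s then h.choose else 0

/-- Band projection onto the principal band generated by `f`. -/
def proj (f x : E) : E := projP f (rpos x) - projP f (rpos (-x))

/-- The principal projection property. -/
def HasPPP (α : Type u) [Lattice α] [AddCommGroup α] : Prop :=
  ∀ f x : α, 0 ≤ x → ∃ s, IsLUB (projChain f x) s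

/-- A subset is sequentially order closed. -/
def SeqOrderClosed (D : Set E) : Prop :=
  (∀ (x : ℕ → E) (l : E), (∀ n, x n ∈ D) → Monotone x → IsLUB (Set.range x) l → l ∈ D) ∧
  (∀ (x : ℕ → E) (l : E), (∀ n, x n ∈ D) → Antitone x → IsGLB (Set.range x) l → l ∈ D)

end BasicDefs

/-! ### Charges on components -/

section Charges

variable {E : Type u} [Lattice E] [AddCommGroup E]
variable {F : Type v} [Lattice F] [AddCommGroup F]

/-- `μ` is an `F`-valued signed charge on the components of `e`. -/
def IsChargeOn (e : E) (μ : E → F) : Prop :=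
  μ 0 = 0 ∧ ∀ p q : E, p ∈ Comp e → q ∈ Comp e → p ⊓ q = 0 → μ (p + q) = μ p + μ q

/-- `μ` is order bounded on the components of `e`. -/
def OrdBddOn (e : E) (μ : E → F) : Prop :=
  ∃ g : F, 0 ≤ g ∧ ∀ p ∈ Comp e, |μ p| ≤ g

/-- `ba(C_e, F)`: order bounded signed `F`-valued charges on the components of `e`. -/
def baSet (e : E) : Set (E → F) := {μ | IsChargeOn e μ ∧ OrdBddOn e μ}

/-- The order on charges: `μ ≤ ν` iff `ν - μ` is positive on components. -/
def baLe (e : E) (μ ν : E → F) : Prop := ∀ p ∈ Comp e, μ p ≤ ν p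

/-- `η` is the least upper bound of `S ⊆ ba(C_e,F)` within `ba(C_e,F)`. -/
def IsLUBba (e : E) (S : Set (E → F)) (η : E → F) : Prop :=
  η ∈ baSet e ∧ (∀ μ ∈ S, baLe e μ η) ∧
    ∀ ξ ∈ baSet e, (∀ μ ∈ S, baLe e μ ξ) → baLe e η ξ

/-- `η` is the greatest lower bound of `S ⊆ ba(C_e,F)` within `ba(C_e,F)`. -/
def IsGLBba (e : E) (S : Set (E → F)) (η : E → F) : Prop :=
  η ∈ baSet e ∧ (∀ μ ∈ S, baLe e η μ) ∧
    ∀ ξ ∈ baSet e, (∀ μ ∈ S, baLe e ξ μ) → baLe e ξ η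

end Charges

section ChargesCCL

variable {E : Type u} [Lattice E] [AddCommGroup E]
variable {F : Type v} [ConditionallyCompleteLattice F] [AddCommGroup F]

/-- Pointwise formula for the supremum of two charges. -/
def chSupAt (e : E) (μ ν : E → F) (p : E) : F :=
  sSup {v | ∃ q, q ∈ Comp e ∧ q ≤ p ∧ v = μ q + ν (p - q)}

/-- Pointwise formula for the infimum of two charges. -/
def chInfAt (e : E) (μ ν : E → F) (p : E) : F :=
  sInf {v | ∃ q, q ∈ Comp e ∧ q ≤ p ∧ v = μ q + ν (p - q)}

/-- The modulus of a charge, via the Riesz–Kantorovich-type formula. -/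
def chargeAbs (e : E) (μ : E → F) : E → F :=
  fun p => sSup {v | ∃ q, q ∈ Comp e ∧ q ≤ p ∧ v = μ q - μ (p - q)}

/-- The positive part of a charge. -/
def chargePos (e : E) (μ : E → F) : E → F :=
  fun p => sSup {v | ∃ q, q ∈ Comp e ∧ q ≤ p ∧ v = μ q}

/-- The negative part of a charge. -/
def chargeNeg (e : E) (μ : E → F) : E → F :=
  fun p => sSup {v | ∃ q, q ∈ Comp e ∧ q ≤ p ∧ v = -(μ q)}

end ChargesCCL

/-! ### Operators -/

section Ops

variable {E : Type u} [Lattice E] [AddCommGroup E] [Module ℝ E]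

def PosOn (Lp : Set E) (φ : E → E) : Prop := ∀ f ∈ Lp, 0 ≤ f → 0 ≤ φ f

def AddOn (Lp : Set E) (φ : E → E) : Prop :=
  ∀ f g : E, f ∈ Lp → g ∈ Lp → φ (f + g) = φ f + φ g

def SmulOn (Lp : Set E) (φ : E → E) : Prop :=
  ∀ (r : ℝ) (f : E), f ∈ Lp → φ (r • f) = r • φ f

/-- `φ` is a regular operator on `Lp`: a difference of two positive linear maps. -/
def RegularOn (Lp : Set E) (φ : E → E) : Prop :=
  ∃ ψ₁ ψ₂ : E → E, AddOn Lp ψ₁ ∧ AddOn Lp ψ₂ ∧ SmulOn Lp ψ₁ ∧ SmulOn Lp ψ₂ ∧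
    PosOn Lp ψ₁ ∧ PosOn Lp ψ₂ ∧ ∀ f ∈ Lp, φ f = ψ₁ f - ψ₂ f

/-- Uniform convergence of a sequence with regulator `u`. -/
def UnifConv (u : E) (s : ℕ → E) (f : E) : Prop :=
  ∃ ε : ℕ → ℝ, Antitone ε ∧ Filter.Tendsto ε Filter.atTop (nhds 0) ∧
    ∀ n, |f - s n| ≤ ε n • u

end Ops

/-! ### Conditional expectation operators -/

section CondExp

variable {E : Type u} [ConditionallyCompleteLattice E] [AddCommGroup E] [Module ℝ E]

/-- `(E, e, T)` is a conditional Riesz triple: `e` is a weak order unit and `T` is a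
strictly positive conditional expectation operator with `T e = e` whose range is a
Dedekind complete Riesz subspace. -/
structure IsCondTriple (e : E) (T : E →ₗ[ℝ] E) : Prop where
  weakUnit : IsWeakUnit e
  pos : ∀ x : E, 0 ≤ x → 0 ≤ T x
  strictPos : ∀ x : E, 0 < x → 0 < T x
  ordCont : ∀ (A : Set E) (s : E), A.Nonempty → DirectedOn (· ≤ ·) A →
    IsLUB A s → IsLUB (T '' A) (T s)
  idem : ∀ x : E, T (T x) = T x
  unitFix : T e = e
  rangeSupClosed : ∀ x y : E, x ∈ Set.range T → y ∈ Set.range T → x ⊔ y ∈ Set.range T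
  rangeDedekind : ∀ A : Set E, A ⊆ Set.range T → A.Nonempty → BddAbove A →
    sSup A ∈ Set.range T

end CondExp

/-! ### Universal completion and T-universal completeness -/

section Univ

variable {E : Type u} {G : Type v}
variable [ConditionallyCompleteLattice E] [AddCommGroup E] [Module ℝ E]
variable [ConditionallyCompleteLattice G] [AddCommGroup G] [Module ℝ G]

/-- `j : E → G` realizes `G` as a universal completion of `E`. -/
structure IsUnivCompletion (j : E →ₗ[ℝ] G) : Prop where
  bipos : ∀ x : E, 0 ≤ j x ↔ 0 ≤ x
  latHom : ∀ x y : E, j (x ⊔ y) = j x ⊔ j y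
  dense : ∀ z : G, 0 < z → ∃ x : E, 0 < j x ∧ j x ≤ z
  univComplete : ∀ S : Set G, (∀ x ∈ S, 0 ≤ x) →
    S.Pairwise (fun a b => a ⊓ b = 0) → BddAbove S

/-- `E` is `T`-universally complete (relative to the universal completion `j : E → G`):
every nonempty upwards directed subset `A ⊆ E` such that `j[T[A]]` is bounded above in
`G` has a supremum in `E`. -/
def TUnivComplete (T : E →ₗ[ℝ] E) (j : E →ₗ[ℝ] G) : Prop :=
  ∀ A : Set E, A.Nonempty → DirectedOn (· ≤ ·) A →
    BddAbove (⇑j '' (⇑T '' A)) → BddAbove A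

end Univ

/-- `mul` is a commutative `f`-algebra multiplication with unit `u`. -/
structure IsFAlgebraMul {G : Type v} [Lattice G] [AddCommGroup G] [Module ℝ G]
    (u : G) (mul : G → G → G) : Prop where
  comm : ∀ x y, mul x y = mul y x
  assoc : ∀ x y z, mul (mul x y) z = mul x (mul y z)
  add_left : ∀ x y z, mul (x + y) z = mul x z + mul y z
  smul_left : ∀ (r : ℝ) (x y), mul (r • x) y = r • mul x y
  one_mul : ∀ x, mul u x = x
  mul_nonneg : ∀ x y, 0 ≤ x → 0 ≤ y → 0 ≤ mul x y
  disj : ∀ x y z, x ⊓ y = 0 → 0 ≤ z → mul x z ⊓ y = 0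

/-! ### Bundled T-universally complete conditional Riesz triples -/

/-- A `T`-universally complete conditional Riesz triple `(E, e, T)`, together with a
universal completion `j : E → G` carrying its `f`-algebra multiplication (with unit
`j e`).  Since `E = L¹(T)` is an `R(T)`-module, products of elements of `L^∞(T)` with
elements of `E` again lie in `E` (`mulClosed`). -/
structure CRT (E : Type u) (G : Type v)
    [ConditionallyCompleteLattice E] [AddCommGroup E] [Module ℝ E]
    [CovariantClass E E (· + ·) (· ≤ ·)] [PosSMulMono ℝ E]
    [ConditionallyCompleteLattice G] [AddCommGroup G] [Module ℝ G]
    [CovariantClass G G (· + ·) (· ≤ ·)] [PosSMulMono ℝ G] where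
  e : E
  T : E →ₗ[ℝ] E
  j : E →ₗ[ℝ] G
  mul : G → G → G
  triple : IsCondTriple e T
  compl : IsUnivCompletion j
  falg : IsFAlgebraMul (j e) mul
  tuc : TUnivComplete T j
  mulClosed : ∀ f g : E, (∃ h : E, h ∈ Set.range T ∧ 0 ≤ h ∧ |f| ≤ h) →
    mul (j f) (j g) ∈ Set.range ⇑j

namespace CRT

variable {E : Type u} {G : Type v}
variable [ConditionallyCompleteLattice E] [AddCommGroup E] [Module ℝ E]
  [CovariantClass E E (· + ·) (· ≤ ·)] [PosSMulMono ℝ E]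
variable [ConditionallyCompleteLattice G] [AddCommGroup G] [Module ℝ G]
  [CovariantClass G G (· + ·) (· ≤ ·)] [PosSMulMono ℝ G]
variable (C : CRT E G)

/-- The range `R(T)`. -/
def R : Set E := Set.range ⇑C.T

/-- The product `g · f` of two elements of `E = L¹(T)`, computed in the universal
completion (meaningful whenever the product lies again in `E`, e.g. for
`g ∈ R(T)` or `g ∈ L^∞(T)`). -/
def sm (g f : E) : E := @Function.invFun E G ⟨0⟩ (⇑C.j) (C.mul (C.j g) (C.j f))

/-- `L^∞(T) = {f : |f| ≤ g for some g ∈ R(T)₊}`. -/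
def Linf : Set E := {f | ∃ h ∈ C.R, 0 ≤ h ∧ |f| ≤ h}

/-- The `R(T)`-valued norm `‖f‖_{T,1} = T |f|`. -/
def nrm1 (f : E) : E := C.T |f|

/-- The `R(T)`-valued norm `‖f‖_{T,∞} = inf {α ∈ R(T)₊ : |f| ≤ α}`. -/
def nrmInf (f : E) : E := sInf {a | a ∈ C.R ∧ 0 ≤ a ∧ |f| ≤ a}

/-- Order bounded signed `R(T)`-valued charges on the components of `u`. -/
def baR (u : E) : Set (E → E) :=
  {μ | IsChargeOn u μ ∧ (∀ p ∈ Comp u, μ p ∈ C.R) ∧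
     ∃ g ∈ C.R, 0 ≤ g ∧ ∀ p ∈ Comp u, |μ p| ≤ g}

/-- `ba(T)`: the `T`-absolutely continuous charges in `ba(C_e, R(T))`. -/
def baT : Set (E → E) :=
  {μ | μ ∈ C.baR C.e ∧ ∀ p ∈ Comp C.e, μ p ∈ pBand (C.T p)}

/-- `x = ∑ αᵢ pᵢ` is a standard representation of the `e`-step function `x` with
`R(T)`-coefficients. -/
def IsStdRep (x : E) (n : ℕ) (α p : Fin n → E) : Prop :=
  (∀ i, α i ∈ C.R) ∧ (∀ i, p i ∈ Comp C.e) ∧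
  (∀ i j, i ≠ j → p i ⊓ p j = 0) ∧ (∑ i, p i) = C.e ∧
  x = ∑ i, C.sm (α i) (p i)

/-- `S_e(T)`: the `e`-step functions with `R(T)`-coefficients. -/
def Steps : Set E := {x | ∃ (n : ℕ) (α p : Fin n → E), C.IsStdRep x n α p}

/-- The integral `I_μ` of a step function: `I_μ (∑ αᵢ pᵢ) = ∑ αᵢ μ(pᵢ)`. -/
def Imu (μ : E → E) (x : E) : E :=
  @Classical.epsilon E ⟨0⟩ fun v =>
    ∃ (n : ℕ) (α p : Fin n → E), C.IsStdRep x n α p ∧ v = ∑ i, C.sm (α i) (μ (p i))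

/-- The integral of a positive element of `L^∞(T)` with respect to a positive charge. -/
def intPos (μ : E → E) (f : E) : E :=
  sSup {v | ∃ g ∈ C.Steps, 0 ≤ g ∧ g ≤ f ∧ v = C.Imu μ g}

/-- The integral `∫ f dμ = ∫ f⁺ dμ⁺ − ∫ f⁻ dμ⁺ − ∫ f⁺ dμ⁻ + ∫ f⁻ dμ⁻`. -/
def integral (μ : E → E) (f : E) : E :=
  C.intPos (chargePos C.e μ) (rpos f) - C.intPos (chargePos C.e μ) (rpos (-f))
    - C.intPos (chargeNeg C.e μ) (rpos f) + C.intPos (chargeNeg C.e μ) (rpos (-f))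

/-- Membership in `L^r(Lp, R(T))`: regular linear operators with values in `R(T)`. -/
structure MemLr (Lp : Set E) (φ : E → E) : Prop where
  add : AddOn Lp φ
  smul : SmulOn Lp φ
  mem : ∀ f ∈ Lp, φ f ∈ C.R
  regular : RegularOn Lp φ

/-- Membership in the `T`-strong dual of `(Lp, nrm)`: `R(T)`-linear, regular,
`nrm`-bounded maps into `R(T)`. -/
structure MemDual (Lp : Set E) (nrm : E → E) (φ : E → E) : Prop where
  add : AddOn Lp φ
  smul : SmulOn Lp φ
  modHom : ∀ g f : E, g ∈ C.R → f ∈ Lp → φ (C.sm g f) = C.sm g (φ f)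
  mem : ∀ f ∈ Lp, φ f ∈ C.R
  regular : RegularOn Lp φ
  bdd : ∃ k ∈ C.R, 0 ≤ k ∧ ∀ f ∈ Lp, |φ f| ≤ C.sm k (nrm f)

/-- The `R(T)`-valued norm on the `T`-strong dual. -/
def dualNorm (Lp : Set E) (nrm : E → E) (φ : E → E) : E :=
  sInf {g | g ∈ C.R ∧ 0 ≤ g ∧ ∀ f ∈ Lp, |φ f| ≤ C.sm g (nrm f)}

/-- `|φ| ≤ |ψ|` in `L^r(Lp, R(T))`, via the Riesz–Kantorovich formula. -/
def OpAbsLe (Lp : Set E) (φ ψ : E → E) : Prop :=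
  ∀ f ∈ Lp, 0 ≤ f → ∀ g ∈ Lp, |g| ≤ f →
    |φ g| ≤ sSup {v | ∃ h, h ∈ Lp ∧ |h| ≤ f ∧ v = |ψ h|}

/-- The canonical partial inverse of `h` in `R(T)`: the element `g` of the band
generated by `|h|` with `h g = P_{|h|} e`. -/
def pinv (h : E) : E :=
  @Classical.epsilon E ⟨0⟩ fun g =>
    g ∈ C.R ∧ g ∈ pBand (|h|) ∧ C.sm h g = proj (|h|) C.e

end CRT

/-! ### Bundled Dedekind complete Riesz spaces, for existential statements -/

structure BRiesz : Type (u + 1) where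
  carrier : Type u
  [ccl : ConditionallyCompleteLattice carrier]
  [grp : AddCommGroup carrier]
  [mod : Module ℝ carrier]
  [cov : CovariantClass carrier carrier (· + ·) (· ≤ ·)]
  [psm : PosSMulMono ℝ carrier]

attribute [instance] BRiesz.ccl BRiesz.grp BRiesz.mod BRiesz.cov BRiesz.psm

/-- `(F, ẽ, T̃)` together with `i : E → F` is a `T`-universal completion of `(E, e, T)`. -/
structure IsTUnivCompletion
    {E : Type u} [ConditionallyCompleteLattice E] [AddCommGroup E] [Module ℝ E]
    {F : Type v} [ConditionallyCompleteLattice F] [AddCommGroup F] [Module ℝ F]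
    (e : E) (T : E →ₗ[ℝ] E) (e' : F) (T' : F →ₗ[ℝ] F) (i : E →ₗ[ℝ] F) : Prop where
  triple : IsCondTriple e' T'
  tuniv : ∃ (U : BRiesz.{v}) (j : F →ₗ[ℝ] U.carrier),
    IsUnivCompletion j ∧ TUnivComplete T' j
  bipos : ∀ x : E, 0 ≤ i x ↔ 0 ≤ x
  latHom : ∀ x y : E, i (x ⊔ y) = i x ⊔ i y
  dense : ∀ z : F, 0 < z → ∃ x : E, 0 < i x ∧ i x ≤ z
  unit : i e = e'
  comm : ∀ x : E, T' (i x) = i (T x)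

/-! ### Powers via functional calculus, for the spaces `L^p(T)` -/

/-- A `T`-universally complete conditional Riesz triple together with the power
functions `x ↦ x^p` (`x ≥ 0`, `p > 0`) of the functional calculus on the universal
completion. -/
structure CRTP (E : Type u) (G : Type v)
    [ConditionallyCompleteLattice E] [AddCommGroup E] [Module ℝ E]
    [CovariantClass E E (· + ·) (· ≤ ·)] [PosSMulMono ℝ E]
    [ConditionallyCompleteLattice G] [AddCommGroup G] [Module ℝ G]
    [CovariantClass G G (· + ·) (· ≤ ·)] [PosSMulMono ℝ G]
    extends CRT E G where
  epow : G → ℝ → G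
  epow_one : ∀ x : G, 0 ≤ x → epow x 1 = x
  epow_nonneg : ∀ (x : G) (p : ℝ), 0 ≤ x → 0 < p → 0 ≤ epow x p
  epow_mono : ∀ (x y : G) (p : ℝ), 0 ≤ x → x ≤ y → 0 < p → epow x p ≤ epow y p
  epow_unit : ∀ p : ℝ, 0 < p → epow (toCRT.j toCRT.e) p = toCRT.j toCRT.e
  epow_exp_mul : ∀ (x : G) (p q : ℝ), 0 ≤ x → 0 < p → 0 < q →
    epow (epow x p) q = epow x (p * q)
  epow_mul : ∀ (x y : G) (p : ℝ), 0 ≤ x → 0 ≤ y → 0 < p →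
    epow (toCRT.mul x y) p = toCRT.mul (epow x p) (epow y p)
  epow_succ : ∀ (x : G) (n : ℕ), 0 ≤ x → 0 < n →
    epow x ((n : ℝ) + 1) = toCRT.mul (epow x (n : ℝ)) x
  epow_sup : ∀ (x y : G) (p : ℝ), 0 ≤ x → 0 ≤ y → 0 < p →
    epow (x ⊔ y) p = epow x p ⊔ epow y p
  epow_rangeT : ∀ (x : E) (p : ℝ), 0 ≤ x → 0 < p → x ∈ Set.range ⇑toCRT.T →
    epow (toCRT.j x) p ∈ ⇑toCRT.j '' Set.range ⇑toCRT.T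

namespace CRTP

variable {E : Type u} {G : Type v}
variable [ConditionallyCompleteLattice E] [AddCommGroup E] [Module ℝ E]
  [CovariantClass E E (· + ·) (· ≤ ·)] [PosSMulMono ℝ E]
variable [ConditionallyCompleteLattice G] [AddCommGroup G] [Module ℝ G]
  [CovariantClass G G (· + ·) (· ≤ ·)] [PosSMulMono ℝ G]
variable (C : CRTP E G)

/-- the `p`-th power of `x ∈ E`, computed in the universal completion. -/
def powE (x : E) (p : ℝ) : E :=
  @Function.invFun E G ⟨0⟩ (⇑C.toCRT.j) (C.epow (C.toCRT.j x) p)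

/-- `L^p(T) = {f ∈ L¹(T) : |f|^p ∈ L¹(T)}` for `p ∈ [1, ∞)`. -/
def LpSet (p : ℝ) : Set E := {f | C.epow (C.toCRT.j |f|) p ∈ Set.range ⇑C.toCRT.j}

/-- The `R(T)`-valued norm `‖f‖_{T,p} = (T |f|^p)^{1/p}`. -/
def nrmP (p : ℝ) (f : E) : E := C.powE (C.toCRT.T (C.powE |f| p)) (1 / p)

end CRTP

/-! `|μ|` dominates `|μ(p)|` on every component and is superadditive on disjoint components,
so every partition sum `∑ |μ(pᵢ)|` lies below `|μ|(e)`. Conversely each term `μ(q) − μ(e − q)`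
of the supremum defining `|μ|(e)` is at most the partition sum over `{q, e − q}`. Finally
`|μ|(e) ∈ R(T)`, since `R(T)` is a Dedekind complete subgroup containing every such term. -/

lemma inf_eq_zero_of_le_of_le {α : Type*} [Lattice α] [Zero α] {x y a b : α} (hx : 0 ≤ x)
    (hy : 0 ≤ y) (hxa : x ≤ a) (hyb : y ≤ b) (hab : a ⊓ b = 0) : x ⊓ y = 0 :=
  le_antisymm ((inf_le_inf hxa hyb).trans_eq hab) (le_inf hx hy)

section LatticeOrderedGroup

variable {α : Type*} [Lattice α] [AddCommGroup α] [AddLeftMono α]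

lemma inf_add_le_inf_add_inf {x b c : α} (hx : 0 ≤ x) (hb : 0 ≤ b) (hc : 0 ≤ c) :
    x ⊓ (b + c) ≤ x ⊓ b + x ⊓ c := by
  rw [← sub_le_iff_le_add']
  have h : x ⊓ (b + c) - x ⊓ b = (x ⊓ (b + c) - x) ⊔ (x ⊓ (b + c) - b) := by
    rw [sub_eq_add_neg, neg_inf, add_sup, ← sub_eq_add_neg, ← sub_eq_add_neg]
  rw [h]
  refine sup_le ((sub_nonpos.2 inf_le_left).trans (le_inf hx hc)) (le_inf ?_ ?_)
  · exact (sub_le_self _ hb).trans inf_le_left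
  · exact sub_le_iff_le_add'.2 inf_le_right

lemma inf_add_eq_zero {x b c : α} (hx : 0 ≤ x) (hb : 0 ≤ b) (hc : 0 ≤ c)
    (hxb : x ⊓ b = 0) (hxc : x ⊓ c = 0) : x ⊓ (b + c) = 0 :=
  le_antisymm ((inf_add_le_inf_add_inf hx hb hc).trans_eq (by rw [hxb, hxc, add_zero]))
    (le_inf hx (add_nonneg hb hc))

lemma inf_sum_eq_zero {ι : Type*} {x : α} (hx : 0 ≤ x) {p : ι → α} {s : Finset ι}
    (hp : ∀ i ∈ s, 0 ≤ p i) (hd : ∀ i ∈ s, x ⊓ p i = 0) : x ⊓ ∑ i ∈ s, p i = 0 :=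
  (Finset.sum_induction p (fun y => 0 ≤ y ∧ x ⊓ y = 0)
    (fun _ _ hb hc => ⟨add_nonneg hb.1 hc.1, inf_add_eq_zero hx hb.1 hc.1 hb.2 hc.2⟩)
    ⟨le_rfl, inf_eq_right.2 hx⟩ (fun i hi => ⟨hp i hi, hd i hi⟩)).2

end LatticeOrderedGroup

section Components

variable {α : Type*} [Lattice α] [AddCommGroup α] {e p q : α}

lemma mem_Comp : p ∈ Comp e ↔ p ⊓ (e - p) = 0 := Iff.rfl

lemma nonneg_of_mem_Comp (hp : p ∈ Comp e) : 0 ≤ p :=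
  (mem_Comp.1 hp).symm.trans_le inf_le_left

lemma zero_mem_Comp (he : 0 ≤ e) : (0 : α) ∈ Comp e := by
  rw [mem_Comp, sub_zero, inf_eq_left.2 he]

lemma self_mem_Comp (he : 0 ≤ e) : e ∈ Comp e := by
  rw [mem_Comp, sub_self, inf_eq_right.2 he]

lemma compl_mem_Comp (hp : p ∈ Comp e) : e - p ∈ Comp e := by
  rw [mem_Comp, sub_sub_cancel, inf_comm]
  exact hp

variable [AddLeftMono α]

lemma le_of_mem_Comp (hp : p ∈ Comp e) : p ≤ e :=
  sub_nonneg.1 ((mem_Comp.1 hp).symm.trans_le inf_le_right)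

lemma sub_mem_Comp (hp : p ∈ Comp e) (hq : q ∈ Comp e) (hqp : q ≤ p) : p - q ∈ Comp e := by
  have hq0 := nonneg_of_mem_Comp hq
  have hpq0 : 0 ≤ p - q := sub_nonneg.2 hqp
  have hep0 : 0 ≤ e - p := sub_nonneg.2 (le_of_mem_Comp hp)
  rw [mem_Comp, show e - (p - q) = (e - p) + q by abel]
  refine inf_add_eq_zero hpq0 hep0 hq0 ?_ ?_
  · exact inf_eq_zero_of_le_of_le hpq0 hep0 (sub_le_self p hq0) le_rfl hp
  · rw [mem_Comp, inf_comm] at hq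
    exact inf_eq_zero_of_le_of_le hpq0 hq0 (sub_le_sub_right (le_of_mem_Comp hp) q) le_rfl hq

lemma add_mem_Comp (hp : p ∈ Comp e) (hq : q ∈ Comp e) (hd : p ⊓ q = 0) : p + q ∈ Comp e := by
  have hp0 := nonneg_of_mem_Comp hp
  have hq0 := nonneg_of_mem_Comp hq
  have hqep : q ≤ e - p := by
    calc q = q ⊓ ((e - p) + p) := by rw [sub_add_cancel, inf_eq_left.2 (le_of_mem_Comp hq)]
      _ ≤ q ⊓ (e - p) + q ⊓ p :=
        inf_add_le_inf_add_inf hq0 (sub_nonneg.2 (le_of_mem_Comp hp)) hp0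
      _ ≤ e - p := by rw [inf_comm q p, hd, add_zero]; exact inf_le_right
  have hr0 : 0 ≤ e - (p + q) := by rw [sub_add_eq_sub_sub]; exact sub_nonneg.2 hqep
  rw [mem_Comp, inf_comm]
  rw [mem_Comp, inf_comm] at hp hq
  refine inf_add_eq_zero hr0 hp0 hq0 ?_ ?_
  · exact inf_eq_zero_of_le_of_le hr0 hp0 (sub_le_sub_left (le_add_of_nonneg_right hq0) e)
      le_rfl hp
  · exact inf_eq_zero_of_le_of_le hr0 hq0 (sub_le_sub_left (le_add_of_nonneg_left hp0) e)
      le_rfl hq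

lemma inf_sum_eq_zero_of_cons {ι : Type*} {p : ι → α} {a : ι} {s : Finset ι} (ha : a ∉ s)
    (hc : ∀ i ∈ s.cons a ha, p i ∈ Comp e)
    (hd : ∀ i ∈ s.cons a ha, ∀ j ∈ s.cons a ha, i ≠ j → p i ⊓ p j = 0) :
    p a ⊓ ∑ i ∈ s, p i = 0 :=
  inf_sum_eq_zero (nonneg_of_mem_Comp (hc a (Finset.mem_cons_self a s)))
    (fun i hi => nonneg_of_mem_Comp (hc i (Finset.mem_cons_of_mem hi))) fun i hi =>
      hd a (Finset.mem_cons_self a s) i (Finset.mem_cons_of_mem hi)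
        (ne_of_mem_of_not_mem hi ha).symm

lemma sum_mem_Comp {ι : Type*} (he : 0 ≤ e) {p : ι → α} {s : Finset ι}
    (hc : ∀ i ∈ s, p i ∈ Comp e) (hd : ∀ i ∈ s, ∀ j ∈ s, i ≠ j → p i ⊓ p j = 0) :
    ∑ i ∈ s, p i ∈ Comp e := by
  induction s using Finset.cons_induction with
  | empty => simpa using zero_mem_Comp he
  | cons a s ha ih =>
    have hdisj := inf_sum_eq_zero_of_cons ha hc hd
    simp only [Finset.forall_mem_cons] at hc hd
    rw [Finset.sum_cons]
    exact add_mem_Comp hc.1 (ih hc.2 fun i hi => (hd.2 i hi).2) hdisj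

end Components

section PartitionSums

variable {α : Type*} [Lattice α] [AddCommGroup α] {F : Type*} [Lattice F] [AddCommGroup F]
  {e q : α} {μ : α → F}

def variationSums (e : α) (μ : α → F) : Set F :=
  {v | ∃ (n : ℕ) (p : Fin n → α), (∀ i, p i ∈ Comp e) ∧ (∀ i j, i ≠ j → p i ⊓ p j = 0) ∧
    (∑ i, p i) = e ∧ v = ∑ i, |μ (p i)|}

lemma abs_add_abs_mem_variationSums (hq : q ∈ Comp e) :
    |μ q| + |μ (e - q)| ∈ variationSums e μ := by
  have hq' : (e - q) ⊓ q = 0 := by rw [inf_comm]; exact hq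
  refine ⟨2, ![q, e - q], ?_, ?_, ?_, ?_⟩
  · simp [Fin.forall_fin_two, hq, compl_mem_Comp hq]
  · simp [Fin.forall_fin_two, mem_Comp.1 hq, hq']
  · simp
  · simp

end PartitionSums

section ChargeModulus

variable {α : Type*} [Lattice α] [AddCommGroup α] {F : Type*} [AddCommGroup F]
  {e p q : α} {μ : α → F} {g : F}

def chargeAbsSet (e : α) (μ : α → F) (p : α) : Set F :=
  {v | ∃ q, q ∈ Comp e ∧ q ≤ p ∧ v = μ q - μ (p - q)}

lemma sub_mem_chargeAbsSet (hq : q ∈ Comp e) (hqp : q ≤ p) :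
    μ q - μ (p - q) ∈ chargeAbsSet e μ p :=
  ⟨q, hq, hqp, rfl⟩

lemma chargeAbsSet_nonempty (hp : p ∈ Comp e) : (chargeAbsSet e μ p).Nonempty :=
  ⟨_, sub_mem_chargeAbsSet hp le_rfl⟩

variable [AddLeftMono α]

lemma add_mem_chargeAbsSet (hμ : IsChargeOn e μ) (hp : p ∈ Comp e) (hq : q ∈ Comp e)
    (hd : p ⊓ q = 0) {v w : F} (hv : v ∈ chargeAbsSet e μ p) (hw : w ∈ chargeAbsSet e μ q) :
    v + w ∈ chargeAbsSet e μ (p + q) := by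
  obtain ⟨p', hp', hp'p, rfl⟩ := hv
  obtain ⟨q', hq', hq'q, rfl⟩ := hw
  have hp'0 := nonneg_of_mem_Comp hp'
  have hq'0 := nonneg_of_mem_Comp hq'
  have hd' : p' ⊓ q' = 0 := inf_eq_zero_of_le_of_le hp'0 hq'0 hp'p hq'q hd
  have hd'' : (p - p') ⊓ (q - q') = 0 :=
    inf_eq_zero_of_le_of_le (sub_nonneg.2 hp'p) (sub_nonneg.2 hq'q)
      (sub_le_self p hp'0) (sub_le_self q hq'0) hd
  refine ⟨p' + q', add_mem_Comp hp' hq' hd', add_le_add hp'p hq'q, ?_⟩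
  rw [show p + q - (p' + q') = (p - p') + (q - q') by abel, hμ.2 _ _ hp' hq' hd',
    hμ.2 _ _ (sub_mem_Comp hp hp' hp'p) (sub_mem_Comp hq hq' hq'q) hd'']
  abel

variable [ConditionallyCompleteLattice F] [AddLeftMono F]

lemma bddAbove_chargeAbsSet (hg : ∀ r ∈ Comp e, |μ r| ≤ g) (hp : p ∈ Comp e) :
    BddAbove (chargeAbsSet e μ p) := by
  refine ⟨g + g, ?_⟩
  rintro _ ⟨q, hq, hqp, rfl⟩
  rw [sub_eq_add_neg]
  exact add_le_add ((le_abs_self _).trans (hg q hq))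
    ((neg_le_abs _).trans (hg _ (sub_mem_Comp hp hq hqp)))

lemma le_chargeAbs (hg : ∀ r ∈ Comp e, |μ r| ≤ g) (hp : p ∈ Comp e) (hq : q ∈ Comp e)
    (hqp : q ≤ p) : μ q - μ (p - q) ≤ chargeAbs e μ p :=
  le_csSup (bddAbove_chargeAbsSet hg hp) (sub_mem_chargeAbsSet hq hqp)

lemma abs_le_chargeAbs (hμ : IsChargeOn e μ) (hg : ∀ r ∈ Comp e, |μ r| ≤ g)
    (hp : p ∈ Comp e) : |μ p| ≤ chargeAbs e μ p := by
  have he : 0 ≤ e := (nonneg_of_mem_Comp hp).trans (le_of_mem_Comp hp)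
  refine abs_le'.2 ⟨?_, ?_⟩
  · simpa [hμ.1] using le_chargeAbs hg hp hp le_rfl
  · simpa [hμ.1] using le_chargeAbs hg hp (zero_mem_Comp he) (nonneg_of_mem_Comp hp)

lemma chargeAbs_add_chargeAbs_le (hμ : IsChargeOn e μ) (hg : ∀ r ∈ Comp e, |μ r| ≤ g)
    (hp : p ∈ Comp e) (hq : q ∈ Comp e) (hd : p ⊓ q = 0) :
    chargeAbs e μ p + chargeAbs e μ q ≤ chargeAbs e μ (p + q) := by
  have hbdd := bddAbove_chargeAbsSet hg (add_mem_Comp hp hq hd)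
  rw [← le_sub_iff_add_le']
  refine csSup_le (chargeAbsSet_nonempty hq) fun w hw => ?_
  rw [le_sub_comm]
  refine csSup_le (chargeAbsSet_nonempty hp) fun v hv => ?_
  rw [le_sub_iff_add_le]
  exact le_csSup hbdd (add_mem_chargeAbsSet hμ hp hq hd hv hw)

lemma sum_abs_le_chargeAbs_sum {ι : Type*} (hμ : IsChargeOn e μ) (hg : ∀ r ∈ Comp e, |μ r| ≤ g)
    (he : 0 ≤ e) {p : ι → α} {s : Finset ι} (hc : ∀ i ∈ s, p i ∈ Comp e)
    (hd : ∀ i ∈ s, ∀ j ∈ s, i ≠ j → p i ⊓ p j = 0) :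
    ∑ i ∈ s, |μ (p i)| ≤ chargeAbs e μ (∑ i ∈ s, p i) := by
  induction s using Finset.cons_induction with
  | empty => simpa [hμ.1] using abs_le_chargeAbs hμ hg (zero_mem_Comp he)
  | cons a s ha ih =>
    have hdisj := inf_sum_eq_zero_of_cons ha hc hd
    simp only [Finset.forall_mem_cons] at hc hd
    have hds : ∀ i ∈ s, ∀ j ∈ s, i ≠ j → p i ⊓ p j = 0 := fun i hi => (hd.2 i hi).2
    rw [Finset.sum_cons, Finset.sum_cons]
    calc |μ (p a)| + ∑ i ∈ s, |μ (p i)|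
        ≤ chargeAbs e μ (p a) + chargeAbs e μ (∑ i ∈ s, p i) :=
          add_le_add (abs_le_chargeAbs hμ hg hc.1) (ih hc.2 hds)
      _ ≤ chargeAbs e μ (p a + ∑ i ∈ s, p i) :=
          chargeAbs_add_chargeAbs_le hμ hg hc.1 (sum_mem_Comp he hc.2 hds) hdisj

lemma isLUB_variationSums_chargeAbs (hμ : μ ∈ baSet e) (he : 0 ≤ e) :
    IsLUB (variationSums e μ) (chargeAbs e μ e) := by
  obtain ⟨hch, g, -, hg⟩ := hμ
  refine ⟨?_, fun b hb => ?_⟩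
  · rintro _ ⟨n, p, hc, hd, rfl, rfl⟩
    exact sum_abs_le_chargeAbs_sum hch hg he (fun i _ => hc i) fun i _ j _ => hd i j
  · refine csSup_le (chargeAbsSet_nonempty (self_mem_Comp he)) ?_
    rintro _ ⟨q, hq, -, rfl⟩
    calc μ q - μ (e - q) ≤ |μ q| + |μ (e - q)| := by
          rw [sub_eq_add_neg]; exact add_le_add (le_abs_self _) (neg_le_abs _)
      _ ≤ b := hb (abs_add_abs_mem_variationSums hq)

end ChargeModulus

namespace CRT

variable {E : Type u} {G : Type v}
  [ConditionallyCompleteLattice E] [AddCommGroup E] [Module ℝ E]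
  [CovariantClass E E (· + ·) (· ≤ ·)] [PosSMulMono ℝ E]
  [ConditionallyCompleteLattice G] [AddCommGroup G] [Module ℝ G]
  [CovariantClass G G (· + ·) (· ≤ ·)] [PosSMulMono ℝ G]
  (C : CRT E G) {u p : E} {μ : E → E}

lemma mem_baSet_of_mem_baR (hμ : μ ∈ C.baR u) : μ ∈ baSet u :=
  have ⟨g, _, hg0, hg⟩ := hμ.2.2
  ⟨hμ.1, g, hg0, hg⟩

lemma chargeAbs_mem_R (hμ : μ ∈ C.baR u) (hp : p ∈ Comp u) : chargeAbs u μ p ∈ C.R := by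
  obtain ⟨-, hR, g, -, -, hg⟩ := hμ
  refine C.triple.rangeDedekind _ ?_ (chargeAbsSet_nonempty hp) (bddAbove_chargeAbsSet hg hp)
  rintro _ ⟨q, hq, hqp, rfl⟩
  obtain ⟨x, hx⟩ := hR q hq
  obtain ⟨y, hy⟩ := hR (p - q) (sub_mem_Comp hp hq hqp)
  exact ⟨x - y, by rw [map_sub, hx, hy]⟩

end CRT

/-- Let `(E,e,T)` be a `T`-universally complete conditional Riesz
triple and `μ ∈ ba(C_e,R(T))`.  Then `|μ|(e)` is the supremum (taken in `R(T)`) of the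
sums `∑_{p ∈ Z} |μ(p)|` over all finite partitions `Z` of `e` into pairwise disjoint
components, i.e. the `R(T)`-valued norm `‖μ‖ = |μ|(e)` equals the total variation. -/
theorem ba_norm_eq_total_variation {E : Type u} {G : Type v}
    [ConditionallyCompleteLattice E] [AddCommGroup E] [Module ℝ E]
    [CovariantClass E E (· + ·) (· ≤ ·)] [PosSMulMono ℝ E]
    [ConditionallyCompleteLattice G] [AddCommGroup G] [Module ℝ G]
    [CovariantClass G G (· + ·) (· ≤ ·)] [PosSMulMono ℝ G]
    (C : CRT E G) (μ : E → E) (hμ : μ ∈ C.baR C.e) :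
    IsLUB {v : E | ∃ (n : ℕ) (p : Fin n → E),
        (∀ i, p i ∈ Comp C.e) ∧ (∀ i j, i ≠ j → p i ⊓ p j = 0) ∧
        (∑ i, p i) = C.e ∧ v = ∑ i, |μ (p i)|}
      (chargeAbs C.e μ C.e) ∧
    chargeAbs C.e μ C.e ∈ C.R := by
  have he : 0 ≤ C.e := C.triple.weakUnit.1.le
  exact ⟨isLUB_variationSums_chargeAbs (C.mem_baSet_of_mem_baR hμ) he,
    C.chargeAbs_mem_R hμ (self_mem_Comp he)⟩

end RieszPaper

end
end

section
/- Let (E,e₁,T) be a T-universally complete conditional Riesz triple and let e₂ ∈ E_+ be a weak order unit of E with T(e₂) = e₂. Then the maps Φ₁ : ba(C_{e₁},R(T)) → ba(C_{e₂},R(T)), μ ↦ (q ↦ μ(P_q(e₁))), and Φ₂ : ba(C_{e₂},R(T)) → ba(C_{e₁},R(T)), μ ↦ (p ↦ μ(P_p(e₂))), are well-defined, mutually inverse, R(T)-linear, isometric Riesz isomorphisms (isometric with respect to the norms μ ↦ |μ|(e₁) and μ ↦ |μ|(e₂)). -/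
open scoped Classical

noncomputable section

namespace RieszPaper

universe u v w

/-!
For a weak order unit `v` and a component `q` of `v`, the band projection `P_q u` of `u ≥ 0` is
the unique `y` with `0 ≤ y ≤ u`, `u - y ⊥ q` and `y ⊥ v - q`: any element disjoint from both
`q` and `v - q` is disjoint from `v`, hence zero. From this characterisation, `q ↦ P_q u` sends
`C_v` onto `C_u`, preserving disjoint sums and complements, with inverse `p ↦ P_p v`. Charges are
transported along this bijection, which therefore preserves the charge axioms, the bounds, the
order and the modulus `|μ|(u) = sup {μ(p) - μ(u - p) : p ∈ C_u}`.
-/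

section LatticeOrderedGroup

variable {E : Type*} [Lattice E] [AddCommGroup E]

lemma inf_eq_zero_of_le_of_le_s9 {a a' b b' : E} (ha : 0 ≤ a) (hb : 0 ≤ b) (haa' : a ≤ a')
    (hbb' : b ≤ b') (h : a' ⊓ b' = 0) : a ⊓ b = 0 :=
  le_antisymm (h ▸ inf_le_inf haa' hbb') (le_inf ha hb)

lemma nonneg_of_mem_comp {e p : E} (hp : p ∈ Comp e) : 0 ≤ p :=
  hp.symm.le.trans inf_le_left

lemma sub_nonneg_of_mem_comp {e p : E} (hp : p ∈ Comp e) : 0 ≤ e - p :=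
  hp.symm.le.trans inf_le_right

lemma sub_mem_comp {e p : E} (hp : p ∈ Comp e) : e - p ∈ Comp e := by
  show (e - p) ⊓ (e - (e - p)) = 0
  rw [sub_sub_cancel, inf_comm]
  exact hp

variable [AddLeftMono E]

lemma inf_add_le_add_inf {a b c : E} (ha : 0 ≤ a) (hb : 0 ≤ b) (hc : 0 ≤ c) :
    (a + b) ⊓ c ≤ a ⊓ c + b ⊓ c := by
  rw [inf_add, add_inf, add_inf]
  exact le_inf (le_inf inf_le_left (inf_le_right.trans (le_add_of_nonneg_left ha)))
    (le_inf (inf_le_right.trans (le_add_of_nonneg_right hb))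
      (inf_le_right.trans (le_add_of_nonneg_left hc)))

lemma add_inf_eq_zero {a b c : E} (ha : 0 ≤ a) (hb : 0 ≤ b) (hc : 0 ≤ c) (hac : a ⊓ c = 0)
    (hbc : b ⊓ c = 0) : (a + b) ⊓ c = 0 :=
  le_antisymm (by simpa [hac, hbc] using inf_add_le_add_inf ha hb hc)
    (le_inf (add_nonneg ha hb) hc)

lemma nsmul_inf_eq_zero {a c : E} (ha : 0 ≤ a) (hc : 0 ≤ c) (h : a ⊓ c = 0) (n : ℕ) :
    (n • a) ⊓ c = 0 := by
  induction n with
  | zero => simpa using hc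
  | succ n ih => rw [succ_nsmul]; exact add_inf_eq_zero (nsmul_nonneg ha n) ha hc ih h

lemma add_le_of_inf_eq_zero {a b x : E} (h : a ⊓ b = 0) (hax : a ≤ x) (hbx : b ≤ x) :
    a + b ≤ x := by
  rw [← inf_add_sup a b, h, zero_add]
  exact sup_le hax hbx

lemma le_of_inf_sub_eq_zero {y z u : E} (hy : 0 ≤ y) (hyu : y ≤ u) (hz : 0 ≤ z) (hzu : z ≤ u)
    (h : y ⊓ (u - z) = 0) : y ≤ z :=
  calc y = (z + (u - z)) ⊓ y := by rw [add_sub_cancel, inf_eq_right.2 hyu]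
    _ ≤ z ⊓ y + (u - z) ⊓ y := inf_add_le_add_inf hz (sub_nonneg.2 hzu) hy
    _ = z ⊓ y := by rw [inf_comm (u - z), h, add_zero]
    _ ≤ z := inf_le_left

lemma _root_.IsLUB.image_inf_left {A : Set E} {s : E} (h : IsLUB A s) (x : E) :
    IsLUB ((x ⊓ ·) '' A) (x ⊓ s) := by
  refine ⟨?_, fun b hb => ?_⟩
  · rintro _ ⟨a, ha, rfl⟩
    exact inf_le_inf_left x (h.1 ha)
  · have hs : s ≤ b + x ⊔ s - x := h.2 fun a ha => le_sub_iff_add_le.2 <|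
      calc a + x = x ⊓ a + x ⊔ a := by rw [inf_add_sup, add_comm]
        _ ≤ b + x ⊔ s := add_le_add (hb ⟨a, ha, rfl⟩) (sup_le_sup_left (h.1 ha) x)
    have : x ⊓ s + x ⊔ s ≤ b + x ⊔ s := by
      rw [inf_add_sup, add_comm]
      exact le_sub_iff_add_le.1 hs
    exact le_of_add_le_add_right this

lemma IsWeakUnit.inf_eq_zero {v q a b : E} (hv : IsWeakUnit v) (hq : 0 ≤ q) (hqv : q ≤ v)
    (ha : 0 ≤ a) (hb : 0 ≤ b) (haq : a ⊓ (v - q) = 0) (hbq : b ⊓ q = 0) : a ⊓ b = 0 := by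
  have hw : 0 ≤ a ⊓ b := le_inf ha hb
  have hvq : 0 ≤ v - q := sub_nonneg.2 hqv
  refine hv.2 _ hw ?_
  have h₁ : q ⊓ (a ⊓ b) = 0 := inf_eq_zero_of_le_of_le_s9 hq hw le_rfl inf_le_right (by rwa [inf_comm])
  have h₂ : (v - q) ⊓ (a ⊓ b) = 0 :=
    inf_eq_zero_of_le_of_le_s9 hvq hw le_rfl inf_le_left (by rwa [inf_comm])
  simpa [inf_comm] using add_inf_eq_zero hq hvq hw h₁ h₂

lemma le_of_mem_comp {e p : E} (hp : p ∈ Comp e) : p ≤ e :=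
  sub_nonneg.1 (sub_nonneg_of_mem_comp hp)

lemma add_mem_comp {e p q : E} (hp : p ∈ Comp e) (hq : q ∈ Comp e) (hpq : p ⊓ q = 0) :
    p + q ∈ Comp e := by
  have hp0 := nonneg_of_mem_comp hp
  have hq0 := nonneg_of_mem_comp hq
  have hr : 0 ≤ e - (p + q) :=
    sub_nonneg.2 (add_le_of_inf_eq_zero hpq (le_of_mem_comp hp) (le_of_mem_comp hq))
  exact add_inf_eq_zero hp0 hq0 hr
    (inf_eq_zero_of_le_of_le_s9 hp0 hr le_rfl (sub_le_sub_left (le_add_of_nonneg_right hq0) e) hp)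
    (inf_eq_zero_of_le_of_le_s9 hq0 hr le_rfl (sub_le_sub_left (le_add_of_nonneg_left hp0) e) hq)

end LatticeOrderedGroup

section BandProjection

variable {E : Type*} [ConditionallyCompleteLattice E] [AddCommGroup E]

lemma projP_isLUB (f x : E) : IsLUB (projChain f x) (projP f x) := by
  have h : ∃ s, IsLUB (projChain f x) s :=
    ⟨_, isLUB_csSup ⟨_, 0, rfl⟩ ⟨x, by rintro _ ⟨n, rfl⟩; exact inf_le_left⟩⟩
  rw [projP, dif_pos h]
  exact h.choose_spec

lemma projP_le (f x : E) : projP f x ≤ x :=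
  (projP_isLUB f x).2 <| by rintro _ ⟨n, rfl⟩; exact inf_le_left

lemma projP_nonneg (f : E) {x : E} (hx : 0 ≤ x) : 0 ≤ projP f x :=
  (projP_isLUB f x).1 ⟨0, by simp [inf_eq_right.2 hx]⟩

variable [AddLeftMono E]

lemma proj_eq_projP (f : E) {x : E} (hx : 0 ≤ x) : proj f x = projP f x := by
  have h0 : projP f (0 : E) = 0 := le_antisymm (projP_le f 0) (projP_nonneg f le_rfl)
  rw [proj, rpos, rpos, sup_eq_left.2 hx, sup_eq_right.2 (neg_nonpos.2 hx), h0, sub_zero]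

lemma proj_le (f : E) {x : E} (hx : 0 ≤ x) : proj f x ≤ x :=
  proj_eq_projP f hx ▸ projP_le f x

lemma proj_nonneg (f : E) {x : E} (hx : 0 ≤ x) : 0 ≤ proj f x :=
  proj_eq_projP f hx ▸ projP_nonneg f hx

variable {f x : E}

lemma sub_proj_inf_eq_zero (hf : 0 ≤ f) (hx : 0 ≤ x) : (x - proj f x) ⊓ f = 0 := by
  rw [proj_eq_projP f hx]
  set P := projP f x
  have hP : IsLUB (projChain f x) P := projP_isLUB f x
  have hshift : IsLUB ((· + f) '' projChain f x) (P + f) :=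
    (OrderIso.addRight f).isLUB_image'.2 hP
  have hmax : x ⊓ (P + f) = P := by
    refine le_antisymm ((hshift.image_inf_left x).2 ?_)
      (le_inf (projP_le f x) (le_add_of_nonneg_right hf))
    rintro _ ⟨_, ⟨_, ⟨n, rfl⟩, rfl⟩, rfl⟩
    have hstep : x ⊓ (x ⊓ n • |f| + f) = x ⊓ (n + 1) • |f| := by
      rw [inf_add, ← inf_assoc, inf_eq_left.2 (le_add_of_nonneg_right hf), abs_of_nonneg hf,
        succ_nsmul]
    exact hstep.trans_le (hP.1 ⟨n + 1, rfl⟩)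
  rw [← add_sub_cancel_left P f, ← inf_sub, hmax, sub_self]

lemma inf_proj_eq_zero {a : E} (ha : 0 ≤ a) (hf : 0 ≤ f) (hx : 0 ≤ x) (h : a ⊓ f = 0) :
    a ⊓ proj f x = 0 := by
  rw [proj_eq_projP f hx]
  refine le_antisymm (((projP_isLUB f x).image_inf_left a).2 ?_) (le_inf ha (projP_nonneg f hx))
  rintro _ ⟨_, ⟨n, rfl⟩, rfl⟩
  calc a ⊓ (x ⊓ n • |f|) ≤ a ⊓ n • f :=
        inf_le_inf_left a (inf_le_right.trans_eq (by rw [abs_of_nonneg hf]))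
    _ = 0 := by rw [inf_comm, nsmul_inf_eq_zero hf ha (by rwa [inf_comm]) n]

lemma proj_zero_left (hx : 0 ≤ x) : proj 0 x = 0 := by
  have hP := proj_nonneg 0 hx
  simpa using inf_proj_eq_zero hP le_rfl hx (inf_eq_right.2 hP)

lemma proj_mem_comp (hf : 0 ≤ f) (hx : 0 ≤ x) : proj f x ∈ Comp x := by
  show proj f x ⊓ (x - proj f x) = 0
  rw [inf_comm]
  exact inf_proj_eq_zero (sub_nonneg.2 (proj_le f hx)) hf hx (sub_proj_inf_eq_zero hf hx)

lemma proj_inf_proj_eq_zero {g : E} (hf : 0 ≤ f) (hg : 0 ≤ g) (hx : 0 ≤ x) (h : f ⊓ g = 0) :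
    proj f x ⊓ proj g x = 0 :=
  inf_proj_eq_zero (proj_nonneg f hx) hg hx <| by
    rw [inf_comm]
    exact inf_proj_eq_zero hg hf hx (by rwa [inf_comm])

lemma proj_inf_sub_eq_zero {v q : E} (hq : q ∈ Comp v) (hx : 0 ≤ x) : proj q x ⊓ (v - q) = 0 := by
  rw [inf_comm]
  exact inf_proj_eq_zero (sub_nonneg_of_mem_comp hq) (nonneg_of_mem_comp hq) hx
    (by rw [inf_comm]; exact hq)

lemma IsWeakUnit.proj_eq {u v q y : E} (hv : IsWeakUnit v) (hq : q ∈ Comp v) (hy : 0 ≤ y)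
    (hyu : y ≤ u) (h₁ : (u - y) ⊓ q = 0) (h₂ : y ⊓ (v - q) = 0) : proj q u = y := by
  have hu : 0 ≤ u := hy.trans hyu
  have hq0 := nonneg_of_mem_comp hq
  have hqv := le_of_mem_comp hq
  have hP := proj_nonneg q hu
  have hPu := proj_le q hu
  refine le_antisymm (le_of_inf_sub_eq_zero hP hPu hy hyu ?_)
    (le_of_inf_sub_eq_zero hy hyu hP hPu ?_)
  · exact hv.inf_eq_zero hq0 hqv hP (sub_nonneg.2 hyu) (proj_inf_sub_eq_zero hq hu) h₁
  · exact hv.inf_eq_zero hq0 hqv hy (sub_nonneg.2 hPu) h₂ (sub_proj_inf_eq_zero hq0 hu)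

variable {u v : E}

lemma proj_sub (hv : IsWeakUnit v) {q : E} (hq : q ∈ Comp v) (hu : 0 ≤ u) :
    proj (v - q) u = u - proj q u :=
  hv.proj_eq (sub_mem_comp hq) (sub_nonneg.2 (proj_le q hu)) (sub_le_self u (proj_nonneg q hu))
    (by rw [sub_sub_cancel]; exact proj_inf_sub_eq_zero hq hu)
    (by rw [sub_sub_cancel]; exact sub_proj_inf_eq_zero (nonneg_of_mem_comp hq) hu)

lemma proj_add (hv : IsWeakUnit v) {q q' : E} (hq : q ∈ Comp v) (hq' : q' ∈ Comp v)
    (hqq' : q ⊓ q' = 0) (hu : 0 ≤ u) : proj (q + q') u = proj q u + proj q' u := by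
  have hq0 := nonneg_of_mem_comp hq
  have hq'0 := nonneg_of_mem_comp hq'
  have hP := proj_nonneg q hu
  have hP' := proj_nonneg q' hu
  have hsum : proj q u + proj q' u ≤ u :=
    add_le_of_inf_eq_zero (proj_inf_proj_eq_zero hq0 hq'0 hu hqq') (proj_le q hu) (proj_le q' hu)
  have hrest : 0 ≤ v - (q + q') := sub_nonneg_of_mem_comp (add_mem_comp hq hq' hqq')
  have hr : 0 ≤ u - (proj q u + proj q' u) := sub_nonneg.2 hsum
  refine hv.proj_eq (add_mem_comp hq hq' hqq') (add_nonneg hP hP') hsum ?_ ?_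
  · rw [inf_comm]
    refine add_inf_eq_zero hq0 hq'0 hr ?_ ?_ <;> rw [inf_comm]
    · exact inf_eq_zero_of_le_of_le_s9 hr hq0 (sub_le_sub_left (le_add_of_nonneg_right hP') u) le_rfl
        (sub_proj_inf_eq_zero hq0 hu)
    · exact inf_eq_zero_of_le_of_le_s9 hr hq'0 (sub_le_sub_left (le_add_of_nonneg_left hP) u) le_rfl
        (sub_proj_inf_eq_zero hq'0 hu)
  · refine add_inf_eq_zero hP hP' hrest ?_ ?_
    · exact inf_eq_zero_of_le_of_le_s9 hP hrest le_rfl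
        (sub_le_sub_left (le_add_of_nonneg_right hq'0) v) (proj_inf_sub_eq_zero hq hu)
    · exact inf_eq_zero_of_le_of_le_s9 hP' hrest le_rfl
        (sub_le_sub_left (le_add_of_nonneg_left hq0) v) (proj_inf_sub_eq_zero hq' hu)

lemma proj_proj (hv : IsWeakUnit v) {p : E} (hp : p ∈ Comp u) : proj (proj p v) u = p := by
  have hp0 := nonneg_of_mem_comp hp
  refine hv.proj_eq (proj_mem_comp hp0 hv.1.le) hp0 (le_of_mem_comp hp) ?_ ?_
  · exact inf_proj_eq_zero (sub_nonneg_of_mem_comp hp) hp0 hv.1.le (by rw [inf_comm]; exact hp)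
  · rw [inf_comm]
    exact sub_proj_inf_eq_zero hp0 hv.1.le

end BandProjection

section Transport

variable {E : Type*} [ConditionallyCompleteLattice E] [AddCommGroup E] [AddLeftMono E]
  {u v : E}

lemma IsChargeOn.comp_proj {F : Type*} [Lattice F] [AddCommGroup F] (hv : IsWeakUnit v)
    (hu : 0 ≤ u) {μ : E → F} (hμ : IsChargeOn u μ) : IsChargeOn v fun q => μ (proj q u) := by
  refine ⟨by simp only [proj_zero_left hu, hμ.1], fun p q hp hq hpq => ?_⟩
  have hp0 := nonneg_of_mem_comp hp
  have hq0 := nonneg_of_mem_comp hq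
  simp only [proj_add hv hp hq hpq hu]
  exact hμ.2 _ _ (proj_mem_comp hp0 hu) (proj_mem_comp hq0 hu)
    (proj_inf_proj_eq_zero hp0 hq0 hu hpq)

lemma baLe_comp_proj_iff {F : Type*} [Lattice F] [AddCommGroup F] (hv : IsWeakUnit v)
    (hu : 0 ≤ u) (μ ν : E → F) :
    baLe v (fun q => μ (proj q u)) (fun q => ν (proj q u)) ↔ baLe u μ ν :=
  ⟨fun h p hp => by
    simpa only [proj_proj hv hp] using h _ (proj_mem_comp (nonneg_of_mem_comp hp) hv.1.le),
  fun h q hq => h _ (proj_mem_comp (nonneg_of_mem_comp hq) hu)⟩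

lemma chargeAbs_comp_proj {F : Type*} [ConditionallyCompleteLattice F] [AddCommGroup F]
    (hv : IsWeakUnit v) (hu : 0 ≤ u) (μ : E → F) :
    chargeAbs v (fun q => μ (proj q u)) v = chargeAbs u μ u := by
  simp only [chargeAbs]
  congr 1
  ext w
  constructor
  · rintro ⟨q, hq, -, rfl⟩
    exact ⟨proj q u, proj_mem_comp (nonneg_of_mem_comp hq) hu, proj_le q hu,
      by rw [proj_sub hv hq hu]⟩
  · rintro ⟨p, hp, -, rfl⟩
    have hq := proj_mem_comp (nonneg_of_mem_comp hp) hv.1.le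
    exact ⟨proj p v, hq, proj_le p hv.1.le, by rw [proj_sub hv hq hu, proj_proj hv hp]⟩

end Transport

namespace CRT

variable {E : Type u} {G : Type v}
variable [ConditionallyCompleteLattice E] [AddCommGroup E] [Module ℝ E]
  [CovariantClass E E (· + ·) (· ≤ ·)] [PosSMulMono ℝ E]
variable [ConditionallyCompleteLattice G] [AddCommGroup G] [Module ℝ G]
  [CovariantClass G G (· + ·) (· ≤ ·)] [PosSMulMono ℝ G]

lemma comp_proj_mem_baR (C : CRT E G) {u v : E} (hv : IsWeakUnit v) (hu : 0 ≤ u) {μ : E → E}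
    (hμ : μ ∈ C.baR u) : (fun q => μ (proj q u)) ∈ C.baR v := by
  obtain ⟨hcharge, hR, g, hg, hg0, hbound⟩ := hμ
  exact ⟨hcharge.comp_proj hv hu, fun q hq => hR _ (proj_mem_comp (nonneg_of_mem_comp hq) hu),
    g, hg, hg0, fun q hq => hbound _ (proj_mem_comp (nonneg_of_mem_comp hq) hu)⟩

end CRT

theorem ba_independent_of_weak_unit_general {E : Type u} {G : Type v}
    [ConditionallyCompleteLattice E] [AddCommGroup E] [Module ℝ E]
    [CovariantClass E E (· + ·) (· ≤ ·)] [PosSMulMono ℝ E]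
    [ConditionallyCompleteLattice G] [AddCommGroup G] [Module ℝ G]
    [CovariantClass G G (· + ·) (· ≤ ·)] [PosSMulMono ℝ G]
    (C : CRT E G) (e₂ : E) (h₂ : IsWeakUnit e₂) :
    -- well-definedness
    (∀ μ ∈ C.baR C.e, (fun q => μ (proj q C.e)) ∈ C.baR e₂) ∧
    (∀ μ ∈ C.baR e₂, (fun p => μ (proj p e₂)) ∈ C.baR C.e) ∧
    -- mutually inverse
    (∀ μ ∈ C.baR C.e, ∀ p ∈ Comp C.e, μ (proj (proj p e₂) C.e) = μ p) ∧
    (∀ μ ∈ C.baR e₂, ∀ q ∈ Comp e₂, μ (proj (proj q C.e) e₂) = μ q) ∧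
    -- R(T)-linearity of Φ₁ (additivity and homogeneity are pointwise)
    (∀ μ ν : E → E, ∀ q : E,
      (fun x => μ x + ν x) (proj q C.e) = μ (proj q C.e) + ν (proj q C.e)) ∧
    (∀ (μ : E → E) (g : E), ∀ q : E,
      (fun x => C.sm g (μ x)) (proj q C.e) = C.sm g (μ (proj q C.e))) ∧
    -- Φ₁ is an order (hence Riesz) isomorphism
    (∀ μ ∈ C.baR C.e, ∀ ν ∈ C.baR C.e,
      (baLe C.e μ ν ↔ baLe e₂ (fun q => μ (proj q C.e)) (fun q => ν (proj q C.e)))) ∧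
    -- Φ₁ and Φ₂ are isometric
    (∀ μ ∈ C.baR C.e,
      chargeAbs e₂ (fun q => μ (proj q C.e)) e₂ = chargeAbs C.e μ C.e) ∧
    (∀ μ ∈ C.baR e₂,
      chargeAbs C.e (fun p => μ (proj p e₂)) C.e = chargeAbs e₂ μ e₂) := by
  have h₁ : IsWeakUnit C.e := C.triple.weakUnit
  exact ⟨fun _ => C.comp_proj_mem_baR h₂ h₁.1.le, fun _ => C.comp_proj_mem_baR h₁ h₂.1.le,
    fun _ _ p hp => by rw [proj_proj h₂ hp], fun _ _ q hq => by rw [proj_proj h₁ hq],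
    fun _ _ _ => rfl, fun _ _ _ => rfl,
    fun μ _ ν _ => (baLe_comp_proj_iff h₂ h₁.1.le μ ν).symm,
    fun μ _ => chargeAbs_comp_proj h₂ h₁.1.le μ, fun μ _ => chargeAbs_comp_proj h₁ h₂.1.le μ⟩

/-- Let `(E,e₁,T)` be a `T`-universally complete conditional Riesz
triple and `e₂ ∈ E₊` another weak order unit with `T e₂ = e₂`.  Then
`Φ₁ : ba(C_{e₁},R(T)) → ba(C_{e₂},R(T)), μ ↦ (q ↦ μ(P_q e₁))` and
`Φ₂ : ba(C_{e₂},R(T)) → ba(C_{e₁},R(T)), μ ↦ (p ↦ μ(P_p e₂))` are well-defined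
mutually inverse `R(T)`-linear isometric Riesz isomorphisms. -/
theorem ba_independent_of_weak_unit {E : Type u} {G : Type v}
    [ConditionallyCompleteLattice E] [AddCommGroup E] [Module ℝ E]
    [CovariantClass E E (· + ·) (· ≤ ·)] [PosSMulMono ℝ E]
    [ConditionallyCompleteLattice G] [AddCommGroup G] [Module ℝ G]
    [CovariantClass G G (· + ·) (· ≤ ·)] [PosSMulMono ℝ G]
    (C : CRT E G) (e₂ : E) (h₂ : IsWeakUnit e₂) (hT₂ : C.T e₂ = e₂) :
    -- well-definedness
    (∀ μ ∈ C.baR C.e, (fun q => μ (proj q C.e)) ∈ C.baR e₂) ∧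
    (∀ μ ∈ C.baR e₂, (fun p => μ (proj p e₂)) ∈ C.baR C.e) ∧
    -- mutually inverse
    (∀ μ ∈ C.baR C.e, ∀ p ∈ Comp C.e, μ (proj (proj p e₂) C.e) = μ p) ∧
    (∀ μ ∈ C.baR e₂, ∀ q ∈ Comp e₂, μ (proj (proj q C.e) e₂) = μ q) ∧
    -- R(T)-linearity of Φ₁ (additivity and homogeneity are pointwise)
    (∀ μ ν : E → E, ∀ q : E,
      (fun x => μ x + ν x) (proj q C.e) = μ (proj q C.e) + ν (proj q C.e)) ∧
    (∀ (μ : E → E) (g : E), ∀ q : E,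
      (fun x => C.sm g (μ x)) (proj q C.e) = C.sm g (μ (proj q C.e))) ∧
    -- Φ₁ is an order (hence Riesz) isomorphism
    (∀ μ ∈ C.baR C.e, ∀ ν ∈ C.baR C.e,
      (baLe C.e μ ν ↔ baLe e₂ (fun q => μ (proj q C.e)) (fun q => ν (proj q C.e)))) ∧
    -- Φ₁ and Φ₂ are isometric
    (∀ μ ∈ C.baR C.e,
      chargeAbs e₂ (fun q => μ (proj q C.e)) e₂ = chargeAbs C.e μ C.e) ∧
    (∀ μ ∈ C.baR e₂,
      chargeAbs C.e (fun p => μ (proj p e₂)) C.e = chargeAbs e₂ μ e₂) :=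
  ba_independent_of_weak_unit_general C e₂ h₂

end RieszPaper

end
end
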